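/- Assume each valuation v_i is concave, differentiable, and homogeneous of degree 1, let ρ ∈ (0,1], let κ > 0 be the identity-creation cost, let x ∈ Ψ(ρ), and define the pricing rule p(y) = ρ·(∑_j q_j y_j)^{1/ρ} with q_1,…,q_m the constants for which Theorem main holds (so that (x,p) is a WE). If v_i(x_i)·(1−ρ) ≤ κ for every agent i, then (x, p, 1) — where every agent uses exactly one identity — is a Sybil Walrasian equilibrium. -/

import Mathlib

/-! Scaling a demanded bundle `y` by `c ≥ 0` changes the utility `v y - p y` into
`c * v y - c ^ (1/ρ) * p y`, which must be maximal at `c = 1`; the first-order condition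
there is `v y = p y / ρ`, i.e. every agent pays exactly `ρ * v y`. With `μ` identities an
agent gets `μ * (v z - p z - κ) ≤ μ * (v y - p y - κ)`, and `v y - p y - κ = v y * (1 - ρ) - κ`
is nonpositive by assumption, so `μ = 1` is optimal. -/

def Nonneg {m : ℕ} (y : Fin m → ℝ) : Prop := ∀ j, 0 ≤ y j

def ValidAlloc {n m : ℕ} (x : Fin n → Fin m → ℝ) : Prop :=
  (∀ i, Nonneg (x i)) ∧ ∀ j, ∑ i, x i j ≤ 1

/-- `y` is in the (quasilinear) demand set for valuation `v` and pricing rule `p`. -/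
def InDemand {m : ℕ} (v p : (Fin m → ℝ) → ℝ) (y : Fin m → ℝ) : Prop :=
  Nonneg y ∧ ∀ z, Nonneg z → v z - p z ≤ v y - p y

def NonzeroCost {m : ℕ} (p : (Fin m → ℝ) → ℝ) (j : Fin m) : Prop :=
  ∃ y : Fin m → ℝ, Nonneg y ∧ (∀ l, l ≠ j → y l = 0) ∧ 0 < p y

def IsWE {n m : ℕ} (v : Fin n → (Fin m → ℝ) → ℝ) (p : (Fin m → ℝ) → ℝ)
    (x : Fin n → Fin m → ℝ) : Prop :=
  (∀ i, InDemand (v i) p (x i)) ∧ ValidAlloc x ∧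
    ∀ j, NonzeroCost p j → ∑ i, x i j = 1

/-- CES welfare `Φ(ρ, x)`. -/
noncomputable def CES {n m : ℕ} (v : Fin n → (Fin m → ℝ) → ℝ) (ρ : ℝ)
    (x : Fin n → Fin m → ℝ) : ℝ :=
  (∑ i, v i (x i) ^ ρ) ^ (1 / ρ)

/-- `x ∈ Ψ(ρ)`. -/
def MaxCES {n m : ℕ} (v : Fin n → (Fin m → ℝ) → ℝ) (ρ : ℝ)
    (x : Fin n → Fin m → ℝ) : Prop :=
  ValidAlloc x ∧ ∀ y, ValidAlloc y → CES v ρ y ≤ CES v ρ x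

/-- Homogeneity of degree `r` on the nonnegative orthant. -/
def Homog {m : ℕ} (r : ℝ) (v : (Fin m → ℝ) → ℝ) : Prop :=
  ∀ y, Nonneg y → ∀ c : ℝ, 0 ≤ c → v (c • y) = c ^ r * v y

def MonotoneVal {m : ℕ} (v : (Fin m → ℝ) → ℝ) : Prop :=
  ∀ y z : Fin m → ℝ, Nonneg y → Nonneg z → (∀ j, y j ≤ z j) → v y ≤ v z

def NonzeroVal {m : ℕ} (v : (Fin m → ℝ) → ℝ) : Prop :=
  ∃ y, Nonneg y ∧ 0 < v y

/-- Differentiability: all partial derivatives exist at every point of the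
nonnegative orthant. -/
def DiffVal {m : ℕ} (v : (Fin m → ℝ) → ℝ) : Prop :=
  ∀ y : Fin m → ℝ, Nonneg y → ∀ j, ∃ d : ℝ,
    HasDerivWithinAt (fun t => v (Function.update y j t)) d (Set.Ici 0) (y j)

/-- Sybil utility for purchasing bundle `y` with each of `η` identities,
with identity-creation cost `κ`. -/
def SybilU {m : ℕ} (v p : (Fin m → ℝ) → ℝ) (κ : ℝ) (y : Fin m → ℝ) (η : ℕ) : ℝ :=
  v ((η : ℝ) • y) - (η : ℝ) * p y - (η : ℝ) * κ

def InSybilDemand {m : ℕ} (v p : (Fin m → ℝ) → ℝ) (κ : ℝ)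
    (y : Fin m → ℝ) (η : ℕ) : Prop :=
  Nonneg y ∧ 1 ≤ η ∧ ∀ (z : Fin m → ℝ) (μ : ℕ), Nonneg z → 1 ≤ μ →
    SybilU v p κ z μ ≤ SybilU v p κ y η

/-- `(x, p, η)` is a Sybil Walrasian equilibrium, where the goods with nonzero
cost are those with `q j > 0`. -/
def IsSWE {n m : ℕ} (v : Fin n → (Fin m → ℝ) → ℝ) (p : (Fin m → ℝ) → ℝ) (κ : ℝ)
    (x : Fin n → Fin m → ℝ) (η : Fin n → ℕ) (q : Fin m → ℝ) : Prop :=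
  (∀ i, InSybilDemand (v i) p κ (x i) (η i)) ∧ (∀ i, Nonneg (x i)) ∧
    (∀ j, ∑ i, x i j ≤ 1) ∧ ∀ j, 0 < q j → ∑ i, x i j = 1

theorem Homog.map_smul_of_one {m : ℕ} {v : (Fin m → ℝ) → ℝ} (hv : Homog 1 v)
    {y : Fin m → ℝ} (hy : Nonneg y) {c : ℝ} (hc : 0 ≤ c) : v (c • y) = c * v y := by
  rw [hv y hy c hc, Real.rpow_one]

theorem Nonneg.smul {m : ℕ} {y : Fin m → ℝ} (hy : Nonneg y) {c : ℝ} (hc : 0 ≤ c) :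
    Nonneg (c • y) :=
  fun j => mul_nonneg hc (hy j)

theorem eq_mul_of_forall_mul_sub_rpow_mul_le {a b r : ℝ}
    (h : ∀ c : ℝ, 0 ≤ c → c * a - c ^ r * b ≤ a - b) : a = r * b := by
  have hderiv : HasDerivAt (fun c : ℝ => c * a - c ^ r * b) (a - r * b) 1 := by
    have hpow := (Real.hasDerivAt_rpow_const (x := 1) (p := r) (Or.inl one_ne_zero)).mul_const b
    rw [Real.one_rpow, mul_one] at hpow
    exact (hasDerivAt_mul_const a).sub hpow
  have hmax : IsLocalMax (fun c : ℝ => c * a - c ^ r * b) 1 := by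
    filter_upwards [Ici_mem_nhds zero_lt_one] with c hc
    simpa using h c hc
  linarith [hmax.hasDerivAt_eq_zero hderiv]

theorem InDemand.eq_mul_of_homog {m : ℕ} {v p : (Fin m → ℝ) → ℝ} {y : Fin m → ℝ} {r : ℝ}
    (hd : InDemand v p y) (hv : Homog 1 v)
    (hp : ∀ c : ℝ, 0 ≤ c → p (c • y) = c ^ r * p y) : v y = r * p y :=
  eq_mul_of_forall_mul_sub_rpow_mul_le fun c hc => by
    simpa only [hv.map_smul_of_one hd.1 hc, hp c hc] using hd.2 (c • y) (hd.1.smul hc)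

theorem rpow_linear_price_smul {m : ℕ} {q y : Fin m → ℝ} (hq : ∀ j, 0 ≤ q j)
    (hy : Nonneg y) (ρ s : ℝ) {c : ℝ} (hc : 0 ≤ c) :
    ρ * (∑ j, q j * (c • y) j) ^ s = c ^ s * (ρ * (∑ j, q j * y j) ^ s) := by
  have hsum : ∑ j, q j * (c • y) j = c * ∑ j, q j * y j := by
    rw [Finset.mul_sum]
    exact Finset.sum_congr rfl fun j _ => by simp only [Pi.smul_apply, smul_eq_mul]; ring
  rw [hsum, Real.mul_rpow hc (Finset.sum_nonneg fun j _ => mul_nonneg (hq j) (hy j))]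
  ring

theorem nonzeroCost_rpow_linear_price {m : ℕ} {q : Fin m → ℝ} {ρ s : ℝ} (hρ : 0 < ρ)
    {j : Fin m} (hqj : 0 < q j) :
    NonzeroCost (fun y => ρ * (∑ l, q l * y l) ^ s) j := by
  refine ⟨Pi.single j 1, fun l => by rw [Pi.single_apply]; split_ifs <;> norm_num,
    fun l hl => Pi.single_eq_of_ne hl 1, ?_⟩
  simpa [Pi.single_apply] using mul_pos hρ (Real.rpow_pos_of_pos hqj s)

theorem InDemand.inSybilDemand_one {m : ℕ} {v p : (Fin m → ℝ) → ℝ} {y : Fin m → ℝ} {κ : ℝ}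
    (hd : InDemand v p y) (hv : Homog 1 v) (hκ : v y - p y ≤ κ) :
    InSybilDemand v p κ y 1 := by
  refine ⟨hd.1, le_rfl, fun z μ hz hμ => ?_⟩
  have hμ1 : (1 : ℝ) ≤ μ := by exact_mod_cast hμ
  have hzy := hd.2 z hz
  simp only [SybilU, hv.map_smul_of_one hz (by positivity : (0 : ℝ) ≤ μ), Nat.cast_one,
    one_smul, one_mul]
  nlinarith

theorem stmt8_general {n m : ℕ} (v : Fin n → (Fin m → ℝ) → ℝ) (ρ κ : ℝ)
    (hρ0 : 0 < ρ)
    (hhom : ∀ i, Homog 1 (v i))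
    (q : Fin m → ℝ) (hq : ∀ j, 0 ≤ q j)
    (p : (Fin m → ℝ) → ℝ) (hp : ∀ y, p y = ρ * (∑ j, q j * y j) ^ (1 / ρ))
    (x : Fin n → Fin m → ℝ) (hwe : IsWE v p x)
    (hsmall : ∀ i, v i (x i) * (1 - ρ) ≤ κ) :
    IsSWE v p κ x (fun _ => 1) q := by
  obtain ⟨hdem, ⟨hxnn, hsupply⟩, hclear⟩ := hwe
  have hprice : ∀ i, p (x i) = ρ * v i (x i) := fun i => by
    have hv := (hdem i).eq_mul_of_homog (hhom i) fun c hc => by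
      simp only [hp]; exact rpow_linear_price_smul hq (hxnn i) ρ _ hc
    rw [hv]; field_simp
  refine ⟨fun i => (hdem i).inSybilDemand_one (hhom i) ?_, hxnn, hsupply, fun j hqj => ?_⟩
  · linarith [hsmall i, hprice i]
  · refine hclear j ?_
    rw [show p = _ from funext hp]
    exact nonzeroCost_rpow_linear_price hρ0 hqj

theorem stmt8 {n m : ℕ} (v : Fin n → (Fin m → ℝ) → ℝ) (ρ κ : ℝ)
    (hρ0 : 0 < ρ) (hρ1 : ρ ≤ 1) (hκ : 0 < κ)
    (hnz : ∀ i, NonzeroVal (v i)) (hmono : ∀ i, MonotoneVal (v i))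
    (hnorm : ∀ i, v i 0 = 0)
    (hhom : ∀ i, Homog 1 (v i))
    (hconc : ∀ i, ConcaveOn ℝ {y : Fin m → ℝ | Nonneg y} (v i))
    (hdiff : ∀ i, DiffVal (v i))
    (q : Fin m → ℝ) (hq : ∀ j, 0 ≤ q j)
    (p : (Fin m → ℝ) → ℝ) (hp : ∀ y, p y = ρ * (∑ j, q j * y j) ^ (1 / ρ))
    (x : Fin n → Fin m → ℝ) (hmax : MaxCES v ρ x) (hwe : IsWE v p x)
    (hsmall : ∀ i, v i (x i) * (1 - ρ) ≤ κ) :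
    IsSWE v p κ x (fun _ => 1) q :=
  stmt8_general v ρ κ hρ0 hhom q hq p hp x hwe hsmall
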